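/- Let E > 0 and 0 < y ≤ 1 be real numbers, let M(E,y) be the 2×2 complex matrix E·!![1+y², y·√(1−y²); y·√(1−y²), 1−y²], let s(y) = (y, √(1−y²))ᵀ ∈ ℂ², and set T = π/(2Ey). Then exp(−i·T·M(E,y)) applied to s(y) equals −i·e^{−iET}·(1, 0)ᵀ; in particular, the second component of the evolved state vanishes and the first component has modulus 1. -/

import Mathlib

open Matrix

/-- The matrix representation of the search Hamiltonian on its invariant plane. -/
noncomputable def searchHamiltonianMatrix (E y : ℝ) : Matrix (Fin 2) (Fin 2) ℂ :=
  (E : ℂ) • !![((1 + y ^ 2 : ℝ) : ℂ), ((y * Real.sqrt (1 - y ^ 2) : ℝ) : ℂ);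
               ((y * Real.sqrt (1 - y ^ 2) : ℝ) : ℂ), ((1 - y ^ 2 : ℝ) : ℂ)]

/-!
Writing `c = √(1 - y²)`, the Hamiltonian is `M = E (1 + y K)` with `K = !![y, c; c, -y]`.
Since `K² = 1`, the exponential series splits into even and odd parts and
`exp (-i T M) = e^{-iET} (cos (ETy) - i sin (ETy) K)`. At `ETy = π/2` only `-i e^{-iET} K`
survives, and `K` maps `s(y) = (y, c)` to `(1, 0)`.
-/

open NormedSpace

section Involution

variable {A : Type*} [NormedRing A] [NormedAlgebra ℂ A] [CompleteSpace A] {K : A}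

theorem exp_smul_of_mul_self_eq_one (hK : K * K = 1) (z : ℂ) :
    exp (z • K) = Complex.cosh z • (1 : A) + Complex.sinh z • K := by
  have hK_pow_even (n : ℕ) : K ^ (2 * n) = 1 := by rw [pow_mul, sq, hK, one_pow]
  refine (exp_series_hasSum_exp' (𝕂 := ℂ) (z • K)).unique (HasSum.even_add_odd ?_ ?_)
  · convert (Complex.hasSum_cosh z).smul_const (1 : A) using 2 with n
    rw [smul_pow, hK_pow_even, smul_smul, div_eq_inv_mul]
  · convert (Complex.hasSum_sinh z).smul_const K using 2 with n
    rw [smul_pow, pow_succ K, hK_pow_even, one_mul, smul_smul, div_eq_inv_mul]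

theorem exp_smul_one_add_smul_of_mul_self_eq_one (hK : K * K = 1) (a b : ℂ) :
    exp (a • (1 : A) + b • K) =
      Complex.exp a • (Complex.cosh b • (1 : A) + Complex.sinh b • K) := by
  let +nondep : NormedAlgebra ℚ A := .restrictScalars ℚ ℂ A
  rw [NormedSpace.exp_add_of_commute ((Commute.one_left K).smul_left a |>.smul_right b),
    exp_smul_of_mul_self_eq_one hK, ← Algebra.algebraMap_eq_smul_one, ← algebraMap_exp_comm,
    Algebra.algebraMap_eq_smul_one, smul_one_mul, Complex.exp_eq_exp_ℂ]

end Involution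

noncomputable def reflectionMatrix (y : ℝ) : Matrix (Fin 2) (Fin 2) ℂ :=
  !![(y : ℂ), (Real.sqrt (1 - y ^ 2) : ℂ); (Real.sqrt (1 - y ^ 2) : ℂ), -(y : ℂ)]

theorem searchHamiltonianMatrix_eq (E y : ℝ) :
    searchHamiltonianMatrix E y = (E : ℂ) • (1 + (y : ℂ) • reflectionMatrix y) := by
  ext i j
  fin_cases i <;> fin_cases j <;>
    simp [searchHamiltonianMatrix, reflectionMatrix, one_apply, sq, sub_eq_add_neg]

theorem sqrt_one_sub_sq_mul_self {y : ℝ} (hy : y ^ 2 ≤ 1) :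
    (Real.sqrt (1 - y ^ 2) : ℂ) * Real.sqrt (1 - y ^ 2) = 1 - y * y := by
  norm_cast
  rw [Real.mul_self_sqrt (by linarith), sq]

theorem reflectionMatrix_mul_self {y : ℝ} (hy : y ^ 2 ≤ 1) :
    reflectionMatrix y * reflectionMatrix y = 1 := by
  ext i j
  fin_cases i <;> fin_cases j <;>
    simp [reflectionMatrix, one_apply, sqrt_one_sub_sq_mul_self hy] <;> ring

theorem reflectionMatrix_mulVec {y : ℝ} (hy : y ^ 2 ≤ 1) :
    reflectionMatrix y *ᵥ ![(y : ℂ), (Real.sqrt (1 - y ^ 2) : ℂ)] = ![1, 0] := by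
  ext i
  fin_cases i
  · simp [reflectionMatrix, mulVec, dotProduct, sqrt_one_sub_sq_mul_self hy]
  · simp [reflectionMatrix, mulVec, dotProduct, mul_comm]

open scoped Norms.Operator in
theorem exp_neg_I_smul_searchHamiltonianMatrix {y : ℝ} (hy : y ^ 2 ≤ 1) (E T : ℝ) :
    exp ((-(Complex.I * T)) • searchHamiltonianMatrix E y) =
      Complex.exp (-(Complex.I * E * T)) •
        (Complex.cos (E * T * y) • (1 : Matrix (Fin 2) (Fin 2) ℂ) -
          (Complex.sin (E * T * y) * Complex.I) • reflectionMatrix y) := by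
  have hsplit : (-(Complex.I * T)) • searchHamiltonianMatrix E y =
      (-(Complex.I * E * T)) • 1 + ((-(E * T * y)) * Complex.I) • reflectionMatrix y := by
    rw [searchHamiltonianMatrix_eq]
    module
  rw [hsplit]
  refine (exp_smul_one_add_smul_of_mul_self_eq_one (reflectionMatrix_mul_self hy) _ _).trans ?_
  rw [Complex.cosh_mul_I, Complex.sinh_mul_I, Complex.cos_neg, Complex.sin_neg, neg_mul,
    neg_smul, sub_eq_add_neg]

/-- **Corollary 2.2** of Chen–Diao: at time `T = π/(2Ey)` the evolved state
`e^{−iHT}|s⟩` equals `−i e^{−iET} (1,0)ᵀ`; in particular its second component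
vanishes and its first component has modulus 1, so the state lies entirely in
the target subspace. -/
theorem measurement_time_state_in_target (E y : ℝ) (hE : 0 < E) (hy0 : 0 < y) (hy1 : y ≤ 1)
    (T : ℝ) (hT : T = Real.pi / (2 * E * y)) :
    (NormedSpace.exp ((-(Complex.I * (T : ℂ))) • searchHamiltonianMatrix E y)).mulVec
        ![(y : ℂ), (Real.sqrt (1 - y ^ 2) : ℂ)] =
      (-Complex.I * Complex.exp (-(Complex.I * (E : ℂ) * (T : ℂ)))) • ![1, 0] ∧
    (NormedSpace.exp ((-(Complex.I * (T : ℂ))) • searchHamiltonianMatrix E y)).mulVec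
        ![(y : ℂ), (Real.sqrt (1 - y ^ 2) : ℂ)] 1 = 0 ∧
    ‖(NormedSpace.exp ((-(Complex.I * (T : ℂ))) •
        searchHamiltonianMatrix E y)).mulVec
          ![(y : ℂ), (Real.sqrt (1 - y ^ 2) : ℂ)] 0‖ = 1 := by
  have hy : y ^ 2 ≤ 1 := by nlinarith
  have hphase : E * T * y = Real.pi / 2 := by
    rw [hT]
    field_simp
  have hstate : (exp ((-(Complex.I * (T : ℂ))) • searchHamiltonianMatrix E y)).mulVec
        ![(y : ℂ), (Real.sqrt (1 - y ^ 2) : ℂ)] =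
      (-Complex.I * Complex.exp (-(Complex.I * (E : ℂ) * (T : ℂ)))) • ![1, 0] := by
    rw [exp_neg_I_smul_searchHamiltonianMatrix hy, ← Complex.ofReal_mul, ← Complex.ofReal_mul,
      hphase, ← Complex.ofReal_cos, ← Complex.ofReal_sin, Real.cos_pi_div_two,
      Real.sin_pi_div_two, smul_mulVec, sub_mulVec, smul_mulVec, smul_mulVec, one_mulVec,
      reflectionMatrix_mulVec hy]
    module
  refine ⟨hstate, ?_, ?_⟩ <;> rw [hstate]
  · simp
  · simp [Complex.norm_exp]
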